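/- arXiv:2106.05533 — 2 statements merged into one kernel-verified Lean document; each statement's English description precedes it below -/
import Mathlib

section
/- Let ρ₀ be an n×n Hermitian matrix with orthonormal eigenbasis (φ_k) and eigenvalues (λ_k), let ν be an n×n Hermitian matrix with ker ρ₀ ⊆ ker ν, and let f : ℝ → ℝ be twice continuously differentiable at each eigenvalue λ_k. Then Tr[D²_f(ρ₀,ν)] = Tr[ν · L_{f′}(ρ₀,ν)], where L_{f′} is the Fréchet derivative associated with the derivative function f′. -/
open Matrix
open scoped ComplexOrder

noncomputable section

/-- Hilbert–Schmidt (Frobenius) norm of a complex matrix. -/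
def hsNorm {ι κ : Type*} [Fintype ι] [Fintype κ] (A : Matrix ι κ ℂ) : ℝ :=
  Real.sqrt (∑ i, ∑ j, ‖A i j‖ ^ 2)

/-- First divided difference `[f,λ]^{[1]}_{k,l}`. -/
def dd1 {n : ℕ} (f : ℝ → ℝ) (lam : Fin n → ℝ) (k l : Fin n) : ℝ :=
  if lam k = lam l then deriv f (lam k)
  else (f (lam k) - f (lam l)) / (lam k - lam l)

/-- Second divided difference `[f,λ]^{[2]}_{k,l,m}`. -/
def dd2 {n : ℕ} (f : ℝ → ℝ) (lam : Fin n → ℝ) (k l m : Fin n) : ℝ :=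
  if lam k = lam m then
    if lam k = lam l then deriv (deriv f) (lam k) / 2
    else (deriv f (lam k) - dd1 f lam k l) / (lam k - lam l)
  else (dd1 f lam k l - dd1 f lam m l) / (lam k - lam m)

/-- The Fréchet derivative `L_f(A,E) = Σ_{k,l} [f,λ]^{[1]}_{k,l} ⟨φ_k, E φ_l⟩ |φ_k⟩⟨φ_l|`,
where the orthonormal eigenbasis `(φ_k)` of `A` is given by the columns of the unitary `U`
and `lam` are the corresponding eigenvalues. -/
def frechet {n : ℕ} (f : ℝ → ℝ) (U : Matrix (Fin n) (Fin n) ℂ) (lam : Fin n → ℝ)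
    (E : Matrix (Fin n) (Fin n) ℂ) : Matrix (Fin n) (Fin n) ℂ :=
  U * (Matrix.of fun k l => (dd1 f lam k l : ℂ) * ((Uᴴ * E * U) k l)) * Uᴴ

/-- The second matrix derivative
`D²_f(A,E) = 2 Σ_{k,l,m} [f,λ]^{[2]}_{k,l,m} ⟨φ_k, E φ_l⟩⟨φ_l, E φ_m⟩ |φ_k⟩⟨φ_m|`. -/
def matD2 {n : ℕ} (f : ℝ → ℝ) (U : Matrix (Fin n) (Fin n) ℂ) (lam : Fin n → ℝ)
    (E : Matrix (Fin n) (Fin n) ℂ) : Matrix (Fin n) (Fin n) ℂ :=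
  U * (Matrix.of fun k m =>
    2 * ∑ l, (dd2 f lam k l m : ℂ) * ((Uᴴ * E * U) k l) * ((Uᴴ * E * U) l m)) * Uᴴ

/-- Primary matrix function `f(A) = Σ_k f(λ_k)|φ_k⟩⟨φ_k|` in the eigenbasis given by `U`. -/
def pmfun {n : ℕ} (f : ℝ → ℝ) (U : Matrix (Fin n) (Fin n) ℂ) (lam : Fin n → ℝ) :
    Matrix (Fin n) (Fin n) ℂ :=
  U * Matrix.diagonal (fun k => (f (lam k) : ℂ)) * Uᴴ

/-- Primary matrix function of a Hermitian matrix: matrix power `A^s` (with `0^s = 0` for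
`s ≠ 0`), given by the continuous functional calculus. -/
def mpow {ι : Type*} [Fintype ι] [DecidableEq ι] (s : ℝ) (A : Matrix ι ι ℂ) : Matrix ι ι ℂ :=
  cfc (fun x : ℝ => x ^ s) A

/-- Primary-matrix-function logarithm (`log 0 = 0` on the kernel). -/
def mlog {ι : Type*} [Fintype ι] [DecidableEq ι] (A : Matrix ι ι ℂ) : Matrix ι ι ℂ :=
  cfc Real.log A

/-- Primary-matrix-function square root; agrees with the positive semidefinite square root on
positive semidefinite matrices. -/
def msqrt {ι : Type*} [Fintype ι] [DecidableEq ι] (A : Matrix ι ι ℂ) : Matrix ι ι ℂ :=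
  cfc Real.sqrt A

/-- Von Neumann entropy `S(ρ) = −Tr[ρ log ρ]` (with `0 log 0 = 0`). -/
def vnEntropy {n : ℕ} (ρ : Matrix (Fin n) (Fin n) ℂ) : ℝ :=
  -(Matrix.trace (cfc (fun x : ℝ => x * Real.log x) ρ)).re

/-- Quantum relative entropy `D(ρ₁‖ρ₂) = Tr[ρ₁ (log ρ₁ − log ρ₂)]`. -/
def qre {n : ℕ} (ρ₁ ρ₂ : Matrix (Fin n) (Fin n) ℂ) : ℝ :=
  (Matrix.trace (ρ₁ * (mlog ρ₁ - mlog ρ₂))).re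

/-- `ξ_s(ρ₁,ρ₂) = −log Tr[ρ₁^s ρ₂^{1−s}]`. -/
def xiS {n : ℕ} (s : ℝ) (ρ₁ ρ₂ : Matrix (Fin n) (Fin n) ℂ) : ℝ :=
  -Real.log ((Matrix.trace (mpow s ρ₁ * mpow (1 - s) ρ₂)).re)

/-- Quantum fidelity `F(ρ₁,ρ₂) = (Tr[√(√ρ₁ ρ₂ √ρ₁)])²`. -/
def fidelity {n : ℕ} (ρ₁ ρ₂ : Matrix (Fin n) (Fin n) ℂ) : ℝ :=
  ((Matrix.trace (msqrt (msqrt ρ₁ * ρ₂ * msqrt ρ₁))).re) ^ 2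

/-- Squared Bures distance `d_B²(ρ₁,ρ₂) = 2(1 − √F(ρ₁,ρ₂))`. -/
def buresSq {n : ℕ} (ρ₁ ρ₂ : Matrix (Fin n) (Fin n) ℂ) : ℝ :=
  2 * (1 - Real.sqrt (fidelity ρ₁ ρ₂))

/-- The upper-left `m×m` block of a matrix written in the eigenbasis of the unperturbed state. -/
def blockB {n : ℕ} (m : ℕ) (M : Matrix (Fin n) (Fin n) ℂ) :
    Matrix {k : Fin n // k.val < m} {k : Fin n // k.val < m} ℂ :=
  Matrix.of fun k l => M k.val l.val

/-- The upper-right block. -/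
def blockC {n : ℕ} (m : ℕ) (M : Matrix (Fin n) (Fin n) ℂ) :
    Matrix {k : Fin n // k.val < m} {k : Fin n // m ≤ k.val} ℂ :=
  Matrix.of fun k l => M k.val l.val

/-- The lower-left block. -/
def blockC' {n : ℕ} (m : ℕ) (M : Matrix (Fin n) (Fin n) ℂ) :
    Matrix {k : Fin n // m ≤ k.val} {k : Fin n // k.val < m} ℂ :=
  Matrix.of fun k l => M k.val l.val

/-- The lower-right block. -/
def blockD {n : ℕ} (m : ℕ) (M : Matrix (Fin n) (Fin n) ℂ) :
    Matrix {k : Fin n // m ≤ k.val} {k : Fin n // m ≤ k.val} ℂ :=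
  Matrix.of fun k l => M k.val l.val

/-- The extended first divided difference `[x^s,λ]^{[1,0]}_{k,l}`. -/
def dd10 {n : ℕ} (s : ℝ) (lam : Fin n → ℝ) (k l : Fin n) : ℝ :=
  if lam k = lam l then (if lam k = 0 then 1 else s * lam k ^ (s - 1))
  else (lam k ^ s - lam l ^ s) / (lam k - lam l)

/-- The first-order term `G` in the support-extending expansion of `(ρ₀+ν)^s`:
in the eigenbasis of `ρ₀` (given by the unitary `U` with eigenvalues `lam`, positive
eigenvalues listed first), it is the Hadamard product of `[x^s,λ]^{[1,0]}` with the block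
matrix `[[ν_B, ν_C],[ν_C†, ν_D^s]]`. -/
def Gmat {n : ℕ} (s : ℝ) (m : ℕ) (U : Matrix (Fin n) (Fin n) ℂ) (lam : Fin n → ℝ)
    (ν : Matrix (Fin n) (Fin n) ℂ) : Matrix (Fin n) (Fin n) ℂ :=
  U * (Matrix.of fun k l =>
    (dd10 s lam k l : ℂ) *
      (if hk : m ≤ k.val then
        if hl : m ≤ l.val then
          mpow s (blockD m (Uᴴ * ν * U)) ⟨k, hk⟩ ⟨l, hl⟩
        else (Uᴴ * ν * U) k l
      else (Uᴴ * ν * U) k l)) * Uᴴ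

/-- Fréchet derivative restricted to the support block (`H₊`): the matrix
`Σ_{k,l<m} [f,λ]^{[1]}_{k,l} ⟨φ_k, ν φ_l⟩ |φ_k⟩⟨φ_l|` written as an `m×m` block. -/
def frechetB {n : ℕ} (m : ℕ) (f : ℝ → ℝ) (lam : Fin n → ℝ)
    (νhat : Matrix (Fin n) (Fin n) ℂ) :
    Matrix {k : Fin n // k.val < m} {k : Fin n // k.val < m} ℂ :=
  Matrix.of fun k l => (dd1 f lam k.val l.val : ℂ) * νhat k.val l.val

/-! Both traces are quadratic forms `∑ k l, c k l * V k l * V l k` in the matrix `V = Uᴴ ν U` of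
`ν` in the eigenbasis. The weight `V k l * V l k` is symmetric in `(k, l)`, so only the
symmetrization of the coefficients matters, and the symmetrized second divided difference
`[f,λ]^{[2]}_{k,l,k} + [f,λ]^{[2]}_{l,k,l}` is the first divided difference `[f′,λ]^{[1]}_{k,l}`. -/

theorem Finset.sum_sum_add_swap_mul {ι R : Type*} [Fintype ι] [CommSemiring R]
    (a W : ι → ι → R) (hW : ∀ k l, W l k = W k l) :
    ∑ k, ∑ l, (a k l + a l k) * W k l = 2 * ∑ k, ∑ l, a k l * W k l := by
  have hswap : ∑ k, ∑ l, a l k * W k l = ∑ k, ∑ l, a k l * W k l := by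
    rw [Finset.sum_comm]
    simp only [hW]
  simp only [add_mul, Finset.sum_add_distrib, hswap, two_mul]

theorem dd1_comm {n : ℕ} (f : ℝ → ℝ) (lam : Fin n → ℝ) (k l : Fin n) :
    dd1 f lam k l = dd1 f lam l k := by
  unfold dd1
  rcases eq_or_ne (lam k) (lam l) with h | h
  · simp [h]
  · rw [if_neg h, if_neg (Ne.symm h), ← neg_sub (lam l), ← neg_sub (f (lam l)), neg_div_neg_eq]

theorem dd2_add_dd2_swap {n : ℕ} (f : ℝ → ℝ) (lam : Fin n → ℝ) (k l : Fin n) :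
    dd2 f lam k l k + dd2 f lam l k l = dd1 (deriv f) lam k l := by
  unfold dd2 dd1
  rcases eq_or_ne (lam k) (lam l) with h | h
  · simp only [h, if_true]
    ring
  · have hkl : lam k - lam l ≠ 0 := sub_ne_zero.mpr h
    have hlk : lam l - lam k ≠ 0 := sub_ne_zero.mpr (Ne.symm h)
    simp only [if_neg h, if_neg (Ne.symm h), if_true]
    field_simp
    ring

theorem trace_matD2 {n : ℕ} (f : ℝ → ℝ) {U : Matrix (Fin n) (Fin n) ℂ}
    (hU : U ∈ Matrix.unitaryGroup (Fin n) ℂ) (lam : Fin n → ℝ) (E : Matrix (Fin n) (Fin n) ℂ) :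
    trace (matD2 f U lam E) =
      2 * ∑ k, ∑ l, (dd2 f lam k l k : ℂ) * ((Uᴴ * E * U) k l * (Uᴴ * E * U) l k) := by
  have hUU : Uᴴ * U = 1 := Matrix.mem_unitaryGroup_iff'.mp hU
  rw [matD2, trace_mul_comm, ← Matrix.mul_assoc, hUU, Matrix.one_mul]
  simp only [trace, diag_apply, of_apply, Finset.mul_sum, mul_assoc]

theorem trace_mul_frechet {n : ℕ} (f : ℝ → ℝ) (U : Matrix (Fin n) (Fin n) ℂ) (lam : Fin n → ℝ)
    (E : Matrix (Fin n) (Fin n) ℂ) :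
    trace (E * frechet f U lam E) =
      ∑ k, ∑ l, (dd1 f lam k l : ℂ) * ((Uᴴ * E * U) k l * (Uᴴ * E * U) l k) := by
  rw [frechet, ← Matrix.mul_assoc, ← Matrix.mul_assoc, trace_mul_comm, ← Matrix.mul_assoc,
    ← Matrix.mul_assoc]
  simp only [trace, diag_apply, mul_apply, of_apply]
  refine Finset.sum_congr rfl fun k _ => Finset.sum_congr rfl fun l _ => ?_
  rw [dd1_comm f lam l k]
  ring

theorem trace_matD2_eq_trace_mul_frechet_deriv_general {n : ℕ}
    (U : Matrix (Fin n) (Fin n) ℂ) (hU : U ∈ Matrix.unitaryGroup (Fin n) ℂ)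
    (lam : Fin n → ℝ)
    (ν : Matrix (Fin n) (Fin n) ℂ)
    (f : ℝ → ℝ) :
    Matrix.trace (matD2 f U lam ν) = Matrix.trace (ν * frechet (deriv f) U lam ν) := by
  rw [trace_matD2 f hU, trace_mul_frechet,
    ← Finset.sum_sum_add_swap_mul _ (fun k l => (Uᴴ * ν * U) k l * (Uᴴ * ν * U) l k)
      fun _ _ => mul_comm _ _]
  simp only [← Complex.ofReal_add, dd2_add_dd2_swap]

/-- `Tr[D²_f(ρ₀,ν)] = Tr[ν L_{f′}(ρ₀,ν)]` for support-preserving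
perturbations. -/
theorem trace_matD2_eq_trace_mul_frechet_deriv {n : ℕ} (ρ₀ : Matrix (Fin n) (Fin n) ℂ)
    (hρ₀ : ρ₀.IsHermitian)
    (U : Matrix (Fin n) (Fin n) ℂ) (hU : U ∈ Matrix.unitaryGroup (Fin n) ℂ)
    (lam : Fin n → ℝ)
    (hdecomp : ρ₀ = U * Matrix.diagonal (fun k => (lam k : ℂ)) * Uᴴ)
    (ν : Matrix (Fin n) (Fin n) ℂ) (hν : ν.IsHermitian)
    (hker : ∀ x : Fin n → ℂ, ρ₀ *ᵥ x = 0 → ν *ᵥ x = 0)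
    (f : ℝ → ℝ) (hf : ∀ k, ContDiffAt ℝ 2 f (lam k)) :
    Matrix.trace (matD2 f U lam ν) = Matrix.trace (ν * frechet (deriv f) U lam ν) :=
  trace_matD2_eq_trace_mul_frechet_deriv_general U hU lam ν f

end
end

section
/- Let ρ₀ be an n×n Hermitian matrix with orthonormal eigenbasis (φ_k) and eigenvalues (λ_k), let ν be an n×n Hermitian matrix with ker ρ₀ ⊆ ker ν, and let f : ℝ → ℝ be twice continuously differentiable at each eigenvalue λ_k with f′(λ_k) ≠ 0 for all k. Then Tr[f′(ρ₀)^{-1} · D²_f(ρ₀,ν)] = −Tr[L_{1/f′}(ρ₀,ν) · L_f(ρ₀,ν)], where f′(ρ₀)^{-1} = Σ_k f′(λ_k)^{-1}|φ_k⟩⟨φ_k| and L_{1/f′} is the Fréchet derivative associated with the function x ↦ 1/f′(x). -/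
open Matrix
open scoped ComplexOrder

noncomputable section

/-!
In the eigenbasis of `ρ₀` both traces are double sums `∑ k l, c k l * (ν̂ k l * ν̂ l k)` with
`ν̂ = Uᴴ ν U`. The weight `ν̂ k l * ν̂ l k` is symmetric in `(k, l)`, whereas the combined
coefficient `2 f′(λ_k)⁻¹ [f,λ]^{[2]}_{k,l,k} + [1/f′,λ]^{[1]}_{k,l} [f,λ]^{[1]}_{l,k}` is
antisymmetric: for `λ_k = λ_l` it vanishes because `(1/f′)′ = -f″/f′²`, and for `λ_k ≠ λ_l`
antisymmetry is a rational identity in `f(λ_k), f(λ_l), f′(λ_k), f′(λ_l)`. Hence the sum is zero.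
-/

open Finset

theorem Finset.sum_sum_eq_zero_of_antisymm {ι G : Type*} [AddCommGroup G] [IsAddTorsionFree G]
    (s : Finset ι) {F : ι → ι → G} (hF : ∀ k l, F l k = -F k l) :
    ∑ k ∈ s, ∑ l ∈ s, F k l = 0 := by
  rw [← self_eq_neg]
  calc ∑ k ∈ s, ∑ l ∈ s, F k l = ∑ l ∈ s, ∑ k ∈ s, -F l k := by
        rw [sum_comm]; simp_rw [← hF]
    _ = -∑ k ∈ s, ∑ l ∈ s, F k l := by simp only [sum_neg_distrib]

theorem Matrix.trace_conj_mul_conj {m R : Type*} [Fintype m] [DecidableEq m] [CommRing R]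
    [StarRing R] {U : Matrix m m R} (hU : U ∈ unitaryGroup m R) (A B : Matrix m m R) :
    trace (U * A * Uᴴ * (U * B * Uᴴ)) = trace (A * B) := by
  have hUU : Uᴴ * U = 1 := mem_unitaryGroup_iff'.mp hU
  calc trace (U * A * Uᴴ * (U * B * Uᴴ)) = trace (U * (A * (Uᴴ * U) * B) * Uᴴ) := by
        simp only [Matrix.mul_assoc]
    _ = trace (Uᴴ * U * (A * (Uᴴ * U) * B)) := trace_mul_cycle _ _ _
    _ = trace (A * B) := by rw [hUU, Matrix.one_mul, Matrix.mul_one]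

section EigenbasisTraces

variable {n : ℕ} {U : Matrix (Fin n) (Fin n) ℂ}

theorem trace_pmfun_mul_matD2 (hU : U ∈ unitaryGroup (Fin n) ℂ) (g f : ℝ → ℝ)
    (lam : Fin n → ℝ) (E : Matrix (Fin n) (Fin n) ℂ) :
    trace (pmfun g U lam * matD2 f U lam E) =
      ∑ k, ∑ l, ((2 * g (lam k) * dd2 f lam k l k : ℝ) : ℂ) *
        ((Uᴴ * E * U) k l * (Uᴴ * E * U) l k) := by
  rw [pmfun, matD2, trace_conj_mul_conj hU]
  set N := Uᴴ * E * U
  simp only [trace, Matrix.diag, diagonal_mul, of_apply, mul_sum]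
  push_cast
  refine sum_congr rfl fun k _ => sum_congr rfl fun l _ => ?_
  ring

theorem trace_frechet_mul_frechet (hU : U ∈ unitaryGroup (Fin n) ℂ) (g f : ℝ → ℝ)
    (lam : Fin n → ℝ) (E : Matrix (Fin n) (Fin n) ℂ) :
    trace (frechet g U lam E * frechet f U lam E) =
      ∑ k, ∑ l, ((dd1 g lam k l * dd1 f lam l k : ℝ) : ℂ) *
        ((Uᴴ * E * U) k l * (Uᴴ * E * U) l k) := by
  rw [frechet, frechet, trace_conj_mul_conj hU]
  set N := Uᴴ * E * U
  simp only [trace, Matrix.diag, mul_apply, of_apply]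
  push_cast
  refine sum_congr rfl fun k _ => sum_congr rfl fun l _ => ?_
  ring

end EigenbasisTraces

section TraceCoeff

variable {n : ℕ} {f : ℝ → ℝ} {lam : Fin n → ℝ} {k l : Fin n}

/-- The coefficient of `N k l * N l k`, `N = Uᴴ ν U`, in `Tr[f′(ρ₀)⁻¹ D²_f] + Tr[L_{1/f′} L_f]`. -/
def traceCoeff (f : ℝ → ℝ) (lam : Fin n → ℝ) (k l : Fin n) : ℝ :=
  2 * (deriv f (lam k))⁻¹ * dd2 f lam k l k
    + dd1 (fun x => (deriv f x)⁻¹) lam k l * dd1 f lam l k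

theorem traceCoeff_of_eq (hf : DifferentiableAt ℝ (deriv f) (lam k))
    (hf' : deriv f (lam k) ≠ 0) (h : lam k = lam l) : traceCoeff f lam k l = 0 := by
  have hinv : deriv (fun x => (deriv f x)⁻¹) (lam k)
      = -deriv (deriv f) (lam k) / deriv f (lam k) ^ 2 := deriv_inv'' hf hf'
  simp only [traceCoeff, dd1, dd2, ← h, ↓reduceIte, hinv]
  field_simp
  ring

theorem traceCoeff_add_swap_of_ne (hk : deriv f (lam k) ≠ 0) (hl : deriv f (lam l) ≠ 0)
    (h : lam k ≠ lam l) : traceCoeff f lam k l + traceCoeff f lam l k = 0 := by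
  have hkl : lam k - lam l ≠ 0 := sub_ne_zero.mpr h
  have hlk : lam l - lam k ≠ 0 := sub_ne_zero.mpr (Ne.symm h)
  simp only [traceCoeff, dd1, dd2, ↓reduceIte, if_neg h, if_neg (Ne.symm h)]
  field_simp
  ring

theorem traceCoeff_swap (hf : ∀ j, DifferentiableAt ℝ (deriv f) (lam j)) (hf' : ∀ j, deriv f (lam j) ≠ 0)
    (k l : Fin n) : traceCoeff f lam l k = -traceCoeff f lam k l := by
  by_cases h : lam k = lam l
  · rw [traceCoeff_of_eq (hf l) (hf' l) h.symm, traceCoeff_of_eq (hf k) (hf' k) h, neg_zero]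
  · exact eq_neg_of_add_eq_zero_right (traceCoeff_add_swap_of_ne (hf' k) (hf' l) h)

end TraceCoeff

theorem trace_inv_deriv_mul_matD2_general {n : ℕ}
    (U : Matrix (Fin n) (Fin n) ℂ) (hU : U ∈ Matrix.unitaryGroup (Fin n) ℂ)
    (lam : Fin n → ℝ)
    (ν : Matrix (Fin n) (Fin n) ℂ)
    (f : ℝ → ℝ) (hf : ∀ k, ContDiffAt ℝ 2 f (lam k))
    (hf' : ∀ k, deriv f (lam k) ≠ 0) :
    Matrix.trace (pmfun (fun x => (deriv f x)⁻¹) U lam * matD2 f U lam ν)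
      = -Matrix.trace (frechet (fun x => (deriv f x)⁻¹) U lam ν * frechet f U lam ν) := by
  have hdf : ∀ k, DifferentiableAt ℝ (deriv f) (lam k) := fun k =>
    ((hf k).derivWithin (m := 1) (by norm_num)).differentiableAt one_ne_zero
  set N := Uᴴ * ν * U
  rw [trace_pmfun_mul_matD2 hU, trace_frechet_mul_frechet hU, eq_neg_iff_add_eq_zero,
    ← sum_add_distrib]
  simp_rw [← sum_add_distrib, ← add_mul, ← Complex.ofReal_add, ← traceCoeff.eq_1]
  refine sum_sum_eq_zero_of_antisymm _ fun k l => ?_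
  rw [traceCoeff_swap hdf hf', mul_comm (N l k), Complex.ofReal_neg, neg_mul]

/-- `Tr[f′(ρ₀)⁻¹ D²_f(ρ₀,ν)] = −Tr[L_{1/f′}(ρ₀,ν) L_f(ρ₀,ν)]` for
support-preserving perturbations. -/
theorem trace_inv_deriv_mul_matD2 {n : ℕ} (ρ₀ : Matrix (Fin n) (Fin n) ℂ)
    (hρ₀ : ρ₀.IsHermitian)
    (U : Matrix (Fin n) (Fin n) ℂ) (hU : U ∈ Matrix.unitaryGroup (Fin n) ℂ)
    (lam : Fin n → ℝ)
    (hdecomp : ρ₀ = U * Matrix.diagonal (fun k => (lam k : ℂ)) * Uᴴ)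
    (ν : Matrix (Fin n) (Fin n) ℂ) (hν : ν.IsHermitian)
    (hker : ∀ x : Fin n → ℂ, ρ₀ *ᵥ x = 0 → ν *ᵥ x = 0)
    (f : ℝ → ℝ) (hf : ∀ k, ContDiffAt ℝ 2 f (lam k))
    (hf' : ∀ k, deriv f (lam k) ≠ 0) :
    Matrix.trace (pmfun (fun x => (deriv f x)⁻¹) U lam * matD2 f U lam ν)
      = -Matrix.trace (frechet (fun x => (deriv f x)⁻¹) U lam ν * frechet f U lam ν) :=
  trace_inv_deriv_mul_matD2_general U hU lam ν f hf hf'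

end
end
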